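/- arXiv:1009.2097 — 2 statements merged into one kernel-verified Lean document; each statement's English description precedes it below -/
import Mathlib

section
/- Let S : ℂ → ℝ with S(z) = S₀(Im z) depending only on Im z, where S₀ : ℝ → ℝ is continuous, and let σ be an antiderivative of S₀. Consider N vortices z_i : ℝ → ℂ, pairwise distinct, with purely imaginary constants μ^i = i κ_i (κ_i ∈ ℝ), evolving by dz_i/dt = Σ_{j≠i} conj(μ^j) S(z_j) / (conj(z_i) - conj(z_j)). Then ψ = Σ_i κ_i σ(Im z_i) is constant in time. -/
open Complex ComplexConjugate

/-!
Along the flow, `d/dt σ(Im z_i) = S₀(Im z_i) · Im ż_i`, so `dψ/dt` is a sum over ordered pairs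
`i ≠ j` of `-m_i m_j Re (1 / (conj z_i - conj z_j))` with `m_i = κ_i S₀(Im z_i)`. Each such term
changes sign when `i` and `j` are exchanged, so the pair sum vanishes and `ψ` is constant.
-/

theorem Finset.sum_sum_filter_ne_eq_zero_of_antisymm {ι G : Type*} [DecidableEq ι]
    [AddCommGroup G] [IsAddTorsionFree G] (s : Finset ι) {f : ι → ι → G}
    (hf : ∀ i j, i ≠ j → f i j = -f j i) :
    ∑ i ∈ s, ∑ j ∈ s.filter (· ≠ i), f i j = 0 := by
  refine self_eq_neg.mp ?_
  calc ∑ i ∈ s, ∑ j ∈ s.filter (· ≠ i), f i j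
      = ∑ j ∈ s, ∑ i ∈ s.filter (· ≠ j), f i j :=
        Finset.sum_comm' fun i j => by simp only [Finset.mem_filter]; grind
    _ = ∑ j ∈ s, ∑ i ∈ s.filter (· ≠ j), -f j i := by
        refine Finset.sum_congr rfl fun j _ => Finset.sum_congr rfl fun i hi => hf i j ?_
        exact (Finset.mem_filter.mp hi).2
    _ = -∑ j ∈ s, ∑ i ∈ s.filter (· ≠ j), f j i := by simp only [Finset.sum_neg_distrib]

theorem HasDerivAt.comp_complex_im {σ : ℝ → ℝ} {z : ℝ → ℂ} {s t : ℝ} {v : ℂ}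
    (hσ : HasDerivAt σ s (z t).im) (hz : HasDerivAt z v t) :
    HasDerivAt (fun t => σ (z t).im) (s * v.im) t :=
  hσ.comp t (imCLM.hasFDerivAt.comp_hasDerivAt t hz)

theorem Complex.im_conj_I_mul_ofReal_mul_ofReal_div (a b : ℝ) (w : ℂ) :
    (conj (I * a) * b / w).im = -(a * b * w⁻¹.re) := by
  simp only [map_mul, conj_I, conj_ofReal, div_eq_mul_inv, mul_im, mul_re, neg_re, neg_im,
    I_re, I_im, ofReal_re, ofReal_im]
  ring

theorem stmt12_general (N : ℕ) (S₀ : ℝ → ℝ)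
    (σ : ℝ → ℝ) (hσ : ∀ y, HasDerivAt σ (S₀ y) y)
    (z : Fin N → ℝ → ℂ) (κ : Fin N → ℝ) (μ : Fin N → ℂ)
    (hμ : ∀ i, μ i = Complex.I * (κ i : ℂ))
    (hode : ∀ i, ∀ t, HasDerivAt (z i)
      (∑ j ∈ Finset.univ.filter (· ≠ i),
        conj (μ j) * (S₀ ((z j t).im) : ℂ) / (conj (z i t) - conj (z j t))) t) :
    ∀ t : ℝ, ∑ i, κ i * σ ((z i t).im) = ∑ i, κ i * σ ((z i 0).im) := by
  set m : Fin N → ℝ → ℝ := fun i t => κ i * S₀ (z i t).im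
  have hψ : ∀ t, HasDerivAt (fun t => ∑ i, κ i * σ ((z i t).im))
      (∑ i, ∑ j ∈ Finset.univ.filter (· ≠ i),
        -(m i t * m j t * (conj (z i t) - conj (z j t))⁻¹.re)) t := by
    intro t
    refine (HasDerivAt.fun_sum fun i _ =>
      ((hσ _).comp_complex_im (hode i t)).const_mul (κ i)).congr_deriv
        (Finset.sum_congr rfl fun i _ => ?_)
    simp only [im_sum, Finset.mul_sum, hμ, im_conj_I_mul_ofReal_mul_ofReal_div, m]
    exact Finset.sum_congr rfl fun j _ => by ring
  have hψ' : ∀ t, deriv (fun t => ∑ i, κ i * σ ((z i t).im)) t = 0 := fun t => by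
    refine (hψ t).deriv.trans (Finset.sum_sum_filter_ne_eq_zero_of_antisymm _ fun i j _ => ?_)
    rw [← neg_sub, ← neg_inv, neg_re]
    ring
  exact fun t => is_const_of_deriv_eq_zero (fun t => (hψ t).differentiableAt) hψ' t 0

/-- Noether-type conservation law for a translation-invariant seabed
`S(z) = S₀(Im z)`: the momentum `ψ = ∑ κ_i σ(Im z_i)` is conserved. -/
theorem stmt12 (N : ℕ) (S₀ : ℝ → ℝ) (hS₀ : Continuous S₀)
    (σ : ℝ → ℝ) (hσ : ∀ y, HasDerivAt σ (S₀ y) y)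
    (z : Fin N → ℝ → ℂ) (κ : Fin N → ℝ) (μ : Fin N → ℂ)
    (hμ : ∀ i, μ i = Complex.I * (κ i : ℂ))
    (hdist : ∀ t, ∀ i j, i ≠ j → z i t ≠ z j t)
    (hode : ∀ i, ∀ t, HasDerivAt (z i)
      (∑ j ∈ Finset.univ.filter (· ≠ i),
        conj (μ j) * (S₀ ((z j t).im) : ℂ) / (conj (z i t) - conj (z j t))) t) :
    ∀ t : ℝ, ∑ i, κ i * σ ((z i t).im) = ∑ i, κ i * σ ((z i 0).im) :=
  stmt12_general N S₀ σ hσ z κ μ hμ hode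
end

section
/- Let S : ℂ → ℝ with S(z) = S₀(|z|²) depending only on |z|², where S₀ : ℝ → ℝ is continuous, and let σ be an antiderivative of S₀. Consider N vortices z_i : ℝ → ℂ, pairwise distinct, with purely imaginary constants μ^i = i κ_i, evolving by dz_i/dt = Σ_{j≠i} conj(μ^j) S(z_j)/(conj(z_i) - conj(z_j)). Then ψ = Σ_i κ_i σ(|z_i|²) is constant in time. -/
open Complex ComplexConjugate

/-!
Differentiating, `ψ' = 2 ∑ᵢ κᵢ Sᵢ ⟪zᵢ, żᵢ⟫ = 2 ∑_{i ≠ j} κᵢ Sᵢ κⱼ Sⱼ Im (z̄ᵢ / (z̄ᵢ - z̄ⱼ))`,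
using `conj μⱼ = -i κⱼ`. The `(i, j)` and `(j, i)` terms cancel because
`z̄ᵢ / (z̄ᵢ - z̄ⱼ) + z̄ⱼ / (z̄ⱼ - z̄ᵢ) = 1` is real.
-/

theorem Finset.sum_sum_ne_eq_zero_of_add_swap {ι M : Type*} [Fintype ι] [DecidableEq ι]
    [AddCommGroup M] [IsAddTorsionFree M] (f : ι → ι → M)
    (hf : ∀ i j, i ≠ j → f i j + f j i = 0) :
    ∑ i, ∑ j ∈ univ.filter (· ≠ i), f i j = 0 := by
  have hswap :
      ∑ i, ∑ j ∈ univ.filter (· ≠ i), f i j = ∑ i, ∑ j ∈ univ.filter (· ≠ i), f j i :=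
    sum_comm' fun i j => by simp [eq_comm]
  have htwice : 2 • ∑ i, ∑ j ∈ univ.filter (· ≠ i), f i j = 0 := by
    rw [two_nsmul]
    nth_rewrite 2 [hswap]
    rw [← sum_add_distrib]
    refine sum_eq_zero fun i _ => ?_
    rw [← sum_add_distrib]
    exact sum_eq_zero fun j hj => hf i j (mem_filter.mp hj).2.symm
  exact (nsmul_right_injective two_ne_zero) (htwice.trans (nsmul_zero 2).symm)

theorem Complex.im_div_sub_add_im_div_sub {x y : ℂ} (h : x ≠ y) :
    (x / (x - y)).im + (y / (y - x)).im = 0 := by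
  have hxy : x - y ≠ 0 := sub_ne_zero.mpr h
  have hsum : x / (x - y) + y / (y - x) = 1 := by
    rw [← neg_sub x y, div_neg, ← sub_eq_add_neg, ← sub_div, div_self hxy]
  rw [← add_im, hsum, one_im]

theorem Complex.inner_conj_I_mul_div (x y : ℂ) (k s : ℝ) :
    inner ℝ x (conj (I * k) * s / (conj x - conj y))
      = k * s * (conj x / (conj x - conj y)).im := by
  have : conj (I * k) * s / (conj x - conj y) * conj x
      = ((k * s : ℝ) : ℂ) * -(I * (conj x / (conj x - conj y))) := by
    simp only [map_mul, conj_I, conj_ofReal, ofReal_mul]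
    ring
  rw [Complex.inner, this, re_ofReal_mul, neg_re, I_mul_re, neg_neg]

theorem hasDerivAt_sum_mul_comp_norm_sq {ι E : Type*} [Fintype ι]
    [NormedAddCommGroup E] [InnerProductSpace ℝ E] {σ σ' : ℝ → ℝ}
    (hσ : ∀ u, HasDerivAt σ (σ' u) u) (κ : ι → ℝ) {z : ι → ℝ → E} {v : ι → E} {t : ℝ}
    (hz : ∀ i, HasDerivAt (z i) (v i) t) :
    HasDerivAt (fun u => ∑ i, κ i * σ (‖z i u‖ ^ 2))
      (∑ i, κ i * (σ' (‖z i t‖ ^ 2) * (2 * inner ℝ (z i t) (v i)))) t :=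
  HasDerivAt.fun_sum fun i _ => ((hσ _).comp t (hz i).norm_sq).const_mul (κ i)

section Vortex

variable {ι : Type*} [Fintype ι] [DecidableEq ι]

noncomputable def vortexVelocity (μ : ι → ℂ) (s : ι → ℝ) (w : ι → ℂ) (i : ι) : ℂ :=
  ∑ j ∈ Finset.univ.filter (· ≠ i), conj (μ j) * s j / (conj (w i) - conj (w j))

theorem sum_mul_inner_vortexVelocity_eq_zero {w : ι → ℂ} (hw : Function.Injective w)
    (κ s : ι → ℝ) :
    ∑ i, κ i * (s i * (2 * inner ℝ (w i) (vortexVelocity (fun j => I * κ j) s w i))) = 0 := by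
  have hterm : ∀ i, κ i * (s i * (2 * inner ℝ (w i) (vortexVelocity (fun j => I * κ j) s w i)))
      = ∑ j ∈ Finset.univ.filter (· ≠ i), 2 * (κ i * s i) * (κ j * s j)
          * (conj (w i) / (conj (w i) - conj (w j))).im := fun i => by
    simp only [vortexVelocity, inner_sum, Complex.inner_conj_I_mul_div, Finset.mul_sum]
    exact Finset.sum_congr rfl fun j _ => by ring
  simp only [hterm]
  refine Finset.sum_sum_ne_eq_zero_of_add_swap _ fun i j hij => ?_
  have hconj : conj (w i) ≠ conj (w j) := (star_injective.comp hw).ne hij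
  linear_combination 2 * (κ i * s i) * (κ j * s j) * Complex.im_div_sub_add_im_div_sub hconj

end Vortex

theorem stmt13_general (N : ℕ) (S₀ : ℝ → ℝ)
    (σ : ℝ → ℝ) (hσ : ∀ u, HasDerivAt σ (S₀ u) u)
    (z : Fin N → ℝ → ℂ) (κ : Fin N → ℝ) (μ : Fin N → ℂ)
    (hμ : ∀ i, μ i = Complex.I * (κ i : ℂ))
    (hdist : ∀ t, ∀ i j, i ≠ j → z i t ≠ z j t)
    (hode : ∀ i, ∀ t, HasDerivAt (z i)
      (∑ j ∈ Finset.univ.filter (· ≠ i),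
        conj (μ j) * (S₀ (‖z j t‖ ^ 2) : ℂ)
          / (conj (z i t) - conj (z j t))) t) :
    ∀ t : ℝ, ∑ i, κ i * σ (‖z i t‖ ^ 2)
      = ∑ i, κ i * σ (‖z i 0‖ ^ 2) := by
  obtain rfl : μ = fun i => I * κ i := funext hμ
  have hψ : ∀ t, HasDerivAt (fun u => ∑ i, κ i * σ (‖z i u‖ ^ 2)) 0 t := fun t => by
    have hv : ∀ i, HasDerivAt (z i)
        (vortexVelocity (fun j => I * κ j) (fun j => S₀ (‖z j t‖ ^ 2)) (z · t) i) t :=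
      (hode · t)
    simpa only [sum_mul_inner_vortexVelocity_eq_zero
      (Function.injective_iff_pairwise_ne.mpr (hdist t))] using
      hasDerivAt_sum_mul_comp_norm_sq hσ κ hv
  exact fun t => is_const_of_deriv_eq_zero (fun u => (hψ u).differentiableAt)
    (fun u => (hψ u).deriv) t 0

/-- Noether-type conservation law for a rotation-invariant seabed
`S(z) = S₀(|z|²)`: the generalized angular impulse `ψ = ∑ κ_i σ(|z_i|²)` is
conserved. -/
theorem stmt13 (N : ℕ) (S₀ : ℝ → ℝ) (hS₀ : Continuous S₀)
    (σ : ℝ → ℝ) (hσ : ∀ u, HasDerivAt σ (S₀ u) u)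
    (z : Fin N → ℝ → ℂ) (κ : Fin N → ℝ) (μ : Fin N → ℂ)
    (hμ : ∀ i, μ i = Complex.I * (κ i : ℂ))
    (hdist : ∀ t, ∀ i j, i ≠ j → z i t ≠ z j t)
    (hode : ∀ i, ∀ t, HasDerivAt (z i)
      (∑ j ∈ Finset.univ.filter (· ≠ i),
        conj (μ j) * (S₀ (‖z j t‖ ^ 2) : ℂ)
          / (conj (z i t) - conj (z j t))) t) :
    ∀ t : ℝ, ∑ i, κ i * σ (‖z i t‖ ^ 2)
      = ∑ i, κ i * σ (‖z i 0‖ ^ 2) :=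
  stmt13_general N S₀ σ hσ z κ μ hμ hdist hode
end
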